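/- arXiv:2509.08308 — 5 statements merged into one kernel-verified Lean document; each statement's English description precedes it below -/
import Mathlib

section
/- For the Möbius map f_a(z) = (a - z)/(1 - a z) with 0 < a < 1, the majorant series sum a + (1 - a^2) * Σ_{n≥1} a^{n-1} r^n exceeds 1 if and only if r > 1/(1 + 2a), for r ∈ (0,1). -/
/-!
The series is geometric, `∑ aⁿ rⁿ⁺¹ = r / (1 - a r)`, and then
`a + (1 - a²) r / (1 - a r) - 1 = (1 - a) ((1 + 2a) r - 1) / (1 - a r)`,
whose sign for `0 < a < 1`, `0 < r < 1` is that of `(1 + 2a) r - 1`.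
-/

theorem tsum_pow_mul_pow_succ {𝕜 : Type*} [NormedField 𝕜] [CompleteSpace 𝕜] {a r : 𝕜}
    (h : ‖a * r‖ < 1) : ∑' n : ℕ, a ^ n * r ^ (n + 1) = r / (1 - a * r) := by
  have hterm (n : ℕ) : a ^ n * r ^ (n + 1) = r * (a * r) ^ n := by ring
  rw [tsum_congr hterm, tsum_mul_left, tsum_geometric_of_norm_lt_one h, div_eq_mul_inv]

theorem add_mul_div_sub_one_eq {𝕜 : Type*} [Field 𝕜] {a r : 𝕜} (h : 1 - a * r ≠ 0) :
    a + (1 - a ^ 2) * (r / (1 - a * r)) - 1 = (1 - a) * ((1 + 2 * a) * r - 1) / (1 - a * r) := by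
  field_simp
  ring

theorem one_lt_add_mul_div_iff {a r : ℝ} (ha : 0 < a) (ha1 : a < 1) (har : a * r < 1) :
    1 < a + (1 - a ^ 2) * (r / (1 - a * r)) ↔ 1 / (1 + 2 * a) < r := by
  have hden : 0 < 1 - a * r := by linarith
  rw [← sub_pos, add_mul_div_sub_one_eq hden.ne', div_pos_iff_of_pos_right hden,
    mul_pos_iff_of_pos_left (by linarith), sub_pos, div_lt_iff₀' (by linarith)]

/-- For the Möbius map `f_a(z) = (a - z)/(1 - a z)` with `0 < a < 1`, the majorant series
`a + (1 - a^2) * Σ_{n≥1} a^{n-1} r^n` exceeds `1` iff `r > 1/(1+2a)`, for `r ∈ (0,1)`. -/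
theorem stmt0 (a r : ℝ) (ha : 0 < a) (ha1 : a < 1) (hr : r ∈ Set.Ioo (0:ℝ) 1) :
    a + (1 - a^2) * ∑' n : ℕ, a ^ n * r ^ (n + 1) > 1 ↔ r > 1 / (1 + 2 * a) := by
  obtain ⟨hr0, hr1⟩ := hr
  have har : a * r < 1 := by nlinarith
  have hnorm : ‖a * r‖ < 1 := by
    rwa [Real.norm_of_nonneg (by positivity)]
  rw [tsum_pow_mul_pow_succ hnorm]
  exact one_lt_add_mul_div_iff ha ha1 har
end

section
/- For p ∈ (0,1), the value (1 + 1/p + p) - (√p + 1/√p)√(p + 1/p) lies strictly between 0 and p. -/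
/-!
With `q = p + 1/p` we have `(√p + 1/√p)² = q + 2`, so the quantity is `a - √(a² - 1)` for
`a = q + 1 = 1 + 1/p + p`. This is positive since `a > 0`, and it is below `p` because
`a² - 1 - (a - p)² = (p + 1)² > 0`.
-/

open Real

lemma sqrt_add_inv_sqrt_mul_sqrt_add_inv {p : ℝ} (hp : 0 < p) :
    (√p + 1 / √p) * √(p + 1 / p) = √((1 + 1 / p + p) ^ 2 - 1) := by
  have hs : √p ≠ 0 := (sqrt_pos.mpr hp).ne'
  have hsq : (√p + 1 / √p) ^ 2 = p + 2 + 1 / p := by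
    field_simp
    rw [sq_sqrt hp.le]
    ring
  calc (√p + 1 / √p) * √(p + 1 / p)
      = √((√p + 1 / √p) ^ 2) * √(p + 1 / p) := by rw [sqrt_sq (by positivity)]
    _ = √((p + 2 + 1 / p) * (p + 1 / p)) := by rw [hsq, sqrt_mul (by positivity)]
    _ = √((1 + 1 / p + p) ^ 2 - 1) := by ring_nf

lemma sub_sqrt_sq_sub_one_pos {a : ℝ} (ha : 0 < a) : 0 < a - √(a ^ 2 - 1) :=
  sub_pos.mpr <| (sqrt_lt' ha).mpr (by linarith)

lemma sub_sqrt_sq_sub_one_lt {p : ℝ} (hp : 0 < p) :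
    (1 + 1 / p + p) - √((1 + 1 / p + p) ^ 2 - 1) < p := by
  have hp_mul_inv : p * (1 / p) = 1 := by field_simp
  have gap : (1 + 1 / p + p) ^ 2 - 1 - (1 + 1 / p) ^ 2 = (p + 1) ^ 2 := by
    linear_combination 2 * hp_mul_inv
  have key : (1 + 1 / p) ^ 2 < (1 + 1 / p + p) ^ 2 - 1 := by
    linarith [gap, sq_pos_of_pos (show 0 < p + 1 by linarith)]
  linarith [(lt_sqrt (by positivity)).mpr key]

/-- For `p ∈ (0,1)`, the Bohr radius `(1 + 1/p + p) - (√p + 1/√p)√(p + 1/p)` lies strictly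
between `0` and `p`. -/
theorem stmt9 (p : ℝ) (hp : p ∈ Set.Ioo (0:ℝ) 1) :
    0 < (1 + 1 / p + p) - (Real.sqrt p + 1 / Real.sqrt p) * Real.sqrt (p + 1 / p) ∧
      (1 + 1 / p + p) - (Real.sqrt p + 1 / Real.sqrt p) * Real.sqrt (p + 1 / p) < p := by
  obtain ⟨hp0, -⟩ := hp
  rw [sqrt_add_inv_sqrt_mul_sqrt_add_inv hp0]
  exact ⟨sub_sqrt_sq_sub_one_pos (by positivity), sub_sqrt_sq_sub_one_lt hp0⟩
end

section
/- Let g : 𝔻 → ℂ be analytic and univalent with convex image g(𝔻). Then for all z ∈ 𝔻, (1/2)(1 - |z|²)|g'(z)| ≤ dist(g(z), ∂g(𝔻)) ≤ (1 - |z|²)|g'(z)|. -/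
/-!
Both bounds are Schwarz–Pick estimates at `z`. Let `Ω = g(𝔻)` and `d = dist(g z, ∂Ω)`.

Upper bound: `g' ≠ 0` on `𝔻`, since a zero of `g'` of order `n - 1 ≥ 1` makes `g` locally
`n`-to-one; hence `g⁻¹` is holomorphic on `Ω ⊇ B(g z, d)` with values in `𝔻`, and Schwarz–Pick
at the centre of that disk gives `d / |g'(z)| ≤ 1 - |z|²`. The same estimate for balls of
arbitrary radius shows `Ω ≠ ℂ`, so `∂Ω` is nonempty.

Lower bound: a nearest boundary point `y` lies outside the convex open set `Ω`, so `Ω` lies in a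
half-plane `Re (c (w - g z)) < β := Re (c (y - g z)) ≤ |c| d`. The map `u ↦ u / (2β - u)` sends
this half-plane into `𝔻`, and Schwarz–Pick for `c (g - g z)` composed with it gives
`|c| |g'(z)| (1 - |z|²) ≤ 2β`.
-/

open Metric Set Filter Function Topology ComplexConjugate

namespace Complex

noncomputable def diskMobius (a w : ℂ) : ℂ := (w - a) / (1 - conj a * w)

variable {a w : ℂ}

lemma one_sub_conj_mul_ne_zero (ha : ‖a‖ < 1) (hw : ‖w‖ < 1) : 1 - conj a * w ≠ 0 := by
  intro h
  have : ‖conj a * w‖ = 1 := by rw [← sub_eq_zero.mp h, norm_one]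
  rw [norm_mul, RCLike.norm_conj] at this
  nlinarith [norm_nonneg a, norm_nonneg w]

lemma normSq_one_sub_conj_mul_sub_normSq_sub (a w : ℂ) :
    normSq (1 - conj a * w) - normSq (w - a) = (1 - normSq a) * (1 - normSq w) := by
  simp only [normSq_apply, sub_re, sub_im, mul_re, mul_im, conj_re, conj_im, one_re, one_im]
  ring

lemma norm_diskMobius_lt_one (ha : ‖a‖ < 1) (hw : ‖w‖ < 1) : ‖diskMobius a w‖ < 1 := by
  have hpos : 0 < (1 - normSq a) * (1 - normSq w) := by
    rw [normSq_eq_norm_sq, normSq_eq_norm_sq]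
    exact mul_pos (by nlinarith [norm_nonneg a]) (by nlinarith [norm_nonneg w])
  rw [diskMobius, norm_div, div_lt_one (norm_pos_iff.mpr (one_sub_conj_mul_ne_zero ha hw)),
    ← sq_lt_sq₀ (norm_nonneg _) (norm_nonneg _), Complex.sq_norm, Complex.sq_norm]
  linarith [normSq_one_sub_conj_mul_sub_normSq_sub a w]

lemma mapsTo_diskMobius (ha : ‖a‖ < 1) : MapsTo (diskMobius a) (ball 0 1) (ball 0 1) :=
  fun _ hw ↦ mem_ball_zero_iff.mpr (norm_diskMobius_lt_one ha (mem_ball_zero_iff.mp hw))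

@[simp] lemma diskMobius_self (a : ℂ) : diskMobius a a = 0 := by simp [diskMobius]

@[simp] lemma diskMobius_neg_zero (a : ℂ) : diskMobius (-a) 0 = a := by simp [diskMobius]

lemma hasDerivAt_diskMobius (hw : 1 - conj a * w ≠ 0) :
    HasDerivAt (diskMobius a) ((1 - conj a * a) / (1 - conj a * w) ^ 2) w := by
  refine (((hasDerivAt_id' w).sub_const a).fun_div
    (((hasDerivAt_id' w).const_mul (conj a)).const_sub 1) hw).congr_deriv ?_
  ring

lemma differentiableOn_diskMobius (ha : ‖a‖ < 1) :
    DifferentiableOn ℂ (diskMobius a) (ball 0 1) :=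
  fun _ hw ↦ (hasDerivAt_diskMobius (one_sub_conj_mul_ne_zero ha (mem_ball_zero_iff.mp hw)))
    |>.differentiableAt.differentiableWithinAt

lemma one_sub_conj_mul_self (a : ℂ) : 1 - conj a * a = ((1 - ‖a‖ ^ 2 : ℝ) : ℂ) := by
  rw [conj_mul']; push_cast; rfl

variable {f : ℂ → ℂ}

theorem norm_deriv_mul_le_one_sub_sq_of_mapsTo_ball {c : ℂ} {r : ℝ}
    (hf : DifferentiableOn ℂ f (ball c r)) (hmaps : MapsTo f (ball c r) (ball 0 1)) (hr : 0 < r) :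
    ‖deriv f c‖ * r ≤ 1 - ‖f c‖ ^ 2 := by
  have hc : c ∈ ball c r := mem_ball_self hr
  have hfc : ‖f c‖ < 1 := mem_ball_zero_iff.mp (hmaps hc)
  have hδ : 0 < 1 - ‖f c‖ ^ 2 := by nlinarith [norm_nonneg (f c)]
  have hne : 1 - conj (f c) * f c ≠ 0 := one_sub_conj_mul_ne_zero hfc hfc
  have hF : HasDerivAt (diskMobius (f c) ∘ f) (deriv f c / ((1 - ‖f c‖ ^ 2 : ℝ) : ℂ)) c := by
    refine ((hasDerivAt_diskMobius hne).comp c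
      (hf.differentiableAt (isOpen_ball.mem_nhds hc)).hasDerivAt).congr_deriv ?_
    rw [← one_sub_conj_mul_self]
    field_simp
  have hschwarz : ‖deriv (diskMobius (f c) ∘ f) c‖ ≤ 1 / r := by
    refine norm_deriv_le_div_of_mapsTo_ball
      ((differentiableOn_diskMobius hfc).comp hf hmaps) (fun w hw ↦ ?_) hr
    rw [comp_apply, diskMobius_self]
    exact ball_subset_closedBall (mapsTo_diskMobius hfc (hmaps hw))
  rwa [hF.deriv, norm_div, norm_real, Real.norm_of_nonneg hδ.le, div_le_div_iff₀ hδ hr,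
    one_mul] at hschwarz

theorem norm_deriv_mul_le_one_sub_sq_of_mapsTo_unitBall {z : ℂ}
    (hf : DifferentiableOn ℂ f (ball 0 1)) (hmaps : MapsTo f (ball 0 1) (ball 0 1))
    (hz : z ∈ ball 0 1) : ‖deriv f z‖ * (1 - ‖z‖ ^ 2) ≤ 1 - ‖f z‖ ^ 2 := by
  have hz' : ‖-z‖ < 1 := by simpa using hz
  have hφ : HasDerivAt (diskMobius (-z)) ((1 - ‖z‖ ^ 2 : ℝ) : ℂ) 0 := by
    have := hasDerivAt_diskMobius (a := -z) (w := 0) (by simp)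
    rwa [map_neg, neg_mul_neg, one_sub_conj_mul_self, mul_zero, sub_zero, one_pow, div_one]
      at this
  have hcomp : HasDerivAt (f ∘ diskMobius (-z)) (deriv f z * ((1 - ‖z‖ ^ 2 : ℝ) : ℂ)) 0 := by
    refine HasDerivAt.comp 0 ?_ hφ
    rw [diskMobius_neg_zero]
    exact (hf.differentiableAt (isOpen_ball.mem_nhds hz)).hasDerivAt
  have hδ : 0 ≤ 1 - ‖z‖ ^ 2 := by nlinarith [norm_nonneg z, mem_ball_zero_iff.mp hz]
  have := norm_deriv_mul_le_one_sub_sq_of_mapsTo_ball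
    (hf.comp (differentiableOn_diskMobius hz') (mapsTo_diskMobius hz'))
    (hmaps.comp (mapsTo_diskMobius hz')) one_pos
  rwa [hcomp.deriv, comp_apply, diskMobius_neg_zero, mul_one, norm_mul, norm_real,
    Real.norm_of_nonneg hδ] at this

lemma norm_lt_norm_two_mul_sub {β : ℝ} {ζ : ℂ} (hβ : 0 < β) (hζ : ζ.re < β) :
    ‖ζ‖ < ‖2 * (β : ℂ) - ζ‖ := by
  rw [← sq_lt_sq₀ (norm_nonneg _) (norm_nonneg _), Complex.sq_norm, Complex.sq_norm]
  simp only [normSq_apply, sub_re, sub_im, mul_re, mul_im, ofReal_re, ofReal_im, re_ofNat,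
    im_ofNat]
  nlinarith

theorem norm_deriv_mul_le_of_re_lt {h : ℂ → ℂ} {z : ℂ} {β : ℝ}
    (hh : DifferentiableOn ℂ h (ball 0 1)) (hre : ∀ w ∈ ball 0 1, (h w).re < β)
    (hz : z ∈ ball 0 1) (hz₀ : h z = 0) : ‖deriv h z‖ * (1 - ‖z‖ ^ 2) ≤ 2 * β := by
  have hβ : 0 < β := by simpa [hz₀] using hre z hz
  have hden : ∀ w ∈ ball 0 1, 2 * (β : ℂ) - h w ≠ 0 := fun w hw ↦
    norm_pos_iff.mp ((norm_nonneg _).trans_lt (norm_lt_norm_two_mul_sub hβ (hre w hw)))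
  set F : ℂ → ℂ := fun w ↦ h w / (2 * β - h w)
  have hF : DifferentiableOn ℂ F (ball 0 1) := hh.div (hh.const_sub _) hden
  have hFmaps : MapsTo F (ball 0 1) (ball 0 1) := fun w hw ↦ by
    rw [mem_ball_zero_iff, norm_div, div_lt_one (norm_pos_iff.mpr (hden w hw))]
    exact norm_lt_norm_two_mul_sub hβ (hre w hw)
  have hhz : HasDerivAt h (deriv h z) z :=
    (hh.differentiableAt (isOpen_ball.mem_nhds hz)).hasDerivAt
  have hFz : HasDerivAt F (deriv h z / (2 * β)) z := by
    refine (hhz.fun_div (hhz.const_sub _) (hden z hz)).congr_deriv ?_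
    simp only [hz₀, zero_mul, sub_zero]
    field_simp
  have := norm_deriv_mul_le_one_sub_sq_of_mapsTo_unitBall hF hFmaps hz
  rw [hFz.deriv, show F z = 0 by simp [F, hz₀], norm_zero, norm_div, norm_mul, norm_real,
    Real.norm_of_nonneg hβ.le, Complex.norm_two, div_mul_eq_mul_div,
    div_le_iff₀ (by positivity)] at this
  linarith

theorem norm_deriv_mul_le_two_mul_dist_of_mapsTo_convex {g : ℂ → ℂ} {Ω : Set ℂ} {y z : ℂ}
    (hΩ : Convex ℝ Ω) (hΩo : IsOpen Ω) (hg : DifferentiableOn ℂ g (ball 0 1))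
    (hmaps : MapsTo g (ball 0 1) Ω) (hy : y ∉ Ω) (hz : z ∈ ball 0 1) :
    ‖deriv g z‖ * (1 - ‖z‖ ^ 2) ≤ 2 * dist (g z) y := by
  obtain ⟨ℓ, hℓ⟩ := RCLike.geometric_hahn_banach_open_point (𝕜 := ℂ) hΩ hΩo hy
  have hℓ_apply : ∀ v, ℓ v = ℓ 1 * v := fun v ↦ by
    rw [mul_comm, ← smul_eq_mul, ← map_smul, smul_eq_mul, mul_one]
  set h : ℂ → ℂ := fun w ↦ ℓ 1 * (g w - g z)
  have hre : ∀ w ∈ ball 0 1, (h w).re < (ℓ 1 * (y - g z)).re := fun w hw ↦ by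
    simp only [h, ← hℓ_apply, map_sub, sub_re]
    have := hℓ _ (hmaps hw)
    rw [RCLike.re_to_complex, RCLike.re_to_complex] at this
    linarith
  have hhz : HasDerivAt h (ℓ 1 * deriv g z) z :=
    ((hg.differentiableAt (isOpen_ball.mem_nhds hz)).hasDerivAt.sub_const _).const_mul _
  have hschwarz := norm_deriv_mul_le_of_re_lt ((hg.sub_const _).const_mul _) hre hz (by simp)
  have hℓ₀ : 0 < ‖ℓ 1‖ := by
    refine norm_pos_iff.mpr fun h0 ↦ ?_
    simpa [h, h0] using hre z hz
  calc ‖deriv g z‖ * (1 - ‖z‖ ^ 2)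
      = ‖deriv h z‖ * (1 - ‖z‖ ^ 2) / ‖ℓ 1‖ := by
        rw [hhz.deriv, norm_mul]; field_simp
    _ ≤ 2 * (ℓ 1 * (y - g z)).re / ‖ℓ 1‖ := by gcongr
    _ ≤ 2 * (‖ℓ 1‖ * dist (g z) y) / ‖ℓ 1‖ := by
        gcongr
        rw [dist_comm, dist_eq_norm, ← norm_mul]
        exact re_le_norm _
    _ = 2 * dist (g z) y := by field_simp

lemma exists_ne_pow_eq_pow_of_mem_nhds_zero {U : Set ℂ} (hU : U ∈ 𝓝 0) {n : ℕ}
    (hn : 2 ≤ n) :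
    ∃ u ∈ U, ∃ v ∈ U, u ≠ v ∧ u ^ n = v ^ n := by
  obtain ⟨ε, hε, hball⟩ := Metric.mem_nhds_iff.mp hU
  have hζ := isPrimitiveRoot_exp n (by lia)
  set ζ := exp (2 * Real.pi * I / n)
  set u : ℂ := ((ε / 2 : ℝ) : ℂ)
  have hu : ‖u‖ < ε := by
    rw [norm_real, Real.norm_of_nonneg (by positivity)]; linarith
  have hu₀ : u ≠ 0 := ofReal_ne_zero.mpr (by positivity)
  refine ⟨u, hball (mem_ball_zero_iff.mpr hu), u * ζ, hball (mem_ball_zero_iff.mpr ?_), ?_, ?_⟩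
  · rwa [norm_mul, hζ.norm'_eq_one (by lia), mul_one]
  · intro h
    exact hζ.ne_one (by lia) (mul_left_cancel₀ hu₀ (h.symm.trans (mul_one u).symm))
  · rw [mul_pow, hζ.pow_eq_one, mul_one]

end Complex

lemma AnalyticAt.exists_pow_eq {h : ℂ → ℂ} {z : ℂ} (hh : AnalyticAt ℂ h z) (hz : h z ≠ 0)
    {n : ℕ} (hn : n ≠ 0) : ∃ q : ℂ → ℂ, AnalyticAt ℂ q z ∧ q z ≠ 0 ∧ ∀ w, q w ^ n = h w := by
  refine ⟨fun w ↦ h z ^ (n⁻¹ : ℂ) * (h w / h z) ^ (n⁻¹ : ℂ), ?_, ?_, fun w ↦ ?_⟩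
  · refine analyticAt_const.mul ((hh.div analyticAt_const hz).cpow analyticAt_const ?_)
    simp [div_self hz, Complex.one_mem_slitPlane]
  · simp [hz]
  · rw [mul_pow, Complex.cpow_nat_inv_pow _ hn, Complex.cpow_nat_inv_pow _ hn,
      mul_div_cancel₀ _ hz]

lemma not_injOn_of_eventually_sub_eq_pow_mul {f h : ℂ → ℂ} {z : ℂ} {s : Set ℂ} {n : ℕ}
    (hn : 2 ≤ n) (hh : AnalyticAt ℂ h z) (hz : h z ≠ 0)
    (hf : ∀ᶠ w in 𝓝 z, f w - f z = (w - z) ^ n * h w) (hs : s ∈ 𝓝 z) : ¬InjOn f s := by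
  intro hinj
  obtain ⟨q, hq, hqz, hqh⟩ := hh.exists_pow_eq hz (n := n) (by lia)
  -- `φ` is a local coordinate at `z` in which `f - f z` is `φ ^ n`, so `f` is `n`-to-one near `z`.
  set φ : ℂ → ℂ := fun w ↦ (w - z) * q w
  have hφ : HasStrictDerivAt φ (q z) z := by
    have hsub : HasStrictDerivAt (fun w : ℂ ↦ w - z) 1 z := (hasStrictDerivAt_id z).sub_const z
    simpa [φ] using hsub.fun_mul hq.hasStrictDerivAt
  have hE : φ '' {w | w ∈ s ∧ f w - f z = φ w ^ n} ∈ 𝓝 0 := by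
    rw [← show φ z = 0 by simp [φ], ← hφ.map_nhds_eq hqz]
    refine image_mem_map ((eventually_mem_set.mpr hs).and (hf.mono fun w hw ↦ ?_))
    rw [hw, mul_pow, hqh]
  obtain ⟨_, ⟨a, ⟨has, ha⟩, rfl⟩, _, ⟨b, ⟨hbs, hb⟩, rfl⟩, hab, habn⟩ :=
    Complex.exists_ne_pow_eq_pow_of_mem_nhds_zero hE hn
  exact hab (congrArg φ (hinj has hbs (sub_left_injective (ha.trans (habn.trans hb.symm)))))

theorem AnalyticAt.deriv_ne_zero_of_injOn {f : ℂ → ℂ} {z : ℂ} {s : Set ℂ}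
    (hf : AnalyticAt ℂ f z) (hs : s ∈ 𝓝 z) (hinj : InjOn f s) : deriv f z ≠ 0 := by
  intro hder
  have hfin : analyticOrderAt (f · - f z) z ≠ ⊤ := by
    rw [Ne, analyticOrderAt_eq_top]
    intro hconst
    have hpunct : ∀ᶠ w in 𝓝[≠] z, (w ∈ s ∧ f w - f z = 0) ∧ w ≠ z :=
      (((eventually_mem_set.mpr hs).and hconst).filter_mono nhdsWithin_le_nhds).and
        self_mem_nhdsWithin
    obtain ⟨w, ⟨hws, hw⟩, hwz⟩ := hpunct.exists
    exact hwz (hinj hws (mem_of_mem_nhds hs) (sub_eq_zero.mp hw))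
  have htwo : (2 : ℕ∞) ≤ analyticOrderAt (f · - f z) z := by
    rw [show (2 : ℕ∞) = (2 : ℕ) from rfl,
      natCast_le_analyticOrderAt_iff_iteratedDeriv_eq_zero (by fun_prop)]
    intro i hi
    interval_cases i
    · simp
    · simpa [iteratedDeriv_one] using hder
  obtain ⟨n, hn⟩ := ENat.ne_top_iff_exists.mp hfin
  obtain ⟨h, hh, hhz, hfh⟩ := (AnalyticAt.analyticOrderAt_eq_natCast (by fun_prop)).mp hn.symm
  exact not_injOn_of_eventually_sub_eq_pow_mul (by exact_mod_cast hn ▸ htwo) hh hhz hfh hs hinj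

section Univalent

variable {g : ℂ → ℂ} {s : Set ℂ}

lemma Set.InjOn.deriv_ne_zero (hinj : InjOn g s) (hs : IsOpen s)
    (hg : DifferentiableOn ℂ g s) {w : ℂ} (hw : w ∈ s) : deriv g w ≠ 0 :=
  (hg.analyticAt (hs.mem_nhds hw)).deriv_ne_zero_of_injOn (hs.mem_nhds hw) hinj

lemma Set.InjOn.isOpen_image (hinj : InjOn g s) (hs : IsOpen s)
    (hg : DifferentiableOn ℂ g s) : IsOpen (g '' s) := by
  refine isOpen_iff_mem_nhds.mpr ?_
  rintro _ ⟨w, hw, rfl⟩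
  rw [← (hg.analyticAt (hs.mem_nhds hw)).hasStrictDerivAt.map_nhds_eq
    (hinj.deriv_ne_zero hs hg hw)]
  exact image_mem_map (hs.mem_nhds hw)

lemma Set.InjOn.hasDerivAt_invFunOn (hinj : InjOn g s) (hs : IsOpen s)
    (hg : DifferentiableOn ℂ g s) {w : ℂ} (hw : w ∈ s) :
    HasDerivAt (invFunOn g s) (deriv g w)⁻¹ (g w) := by
  have hleft : ∀ᶠ x in 𝓝 w, invFunOn g s (g x) = x :=
    (hs.eventually_mem hw).mono fun x hx ↦ hinj.leftInvOn_invFunOn hx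
  exact ((hg.analyticAt (hs.mem_nhds hw)).hasStrictDerivAt.to_local_left_inverse
    (hinj.deriv_ne_zero hs hg hw) hleft).hasDerivAt

theorem radius_le_of_ball_subset_image (hg : DifferentiableOn ℂ g (ball 0 1))
    (hinj : InjOn g (ball 0 1)) {z : ℂ} (hz : z ∈ ball 0 1) {r : ℝ} (hr : 0 < r)
    (hball : ball (g z) r ⊆ g '' ball 0 1) : r ≤ (1 - ‖z‖ ^ 2) * ‖deriv g z‖ := by
  have hG : DifferentiableOn ℂ (invFunOn g (ball 0 1)) (ball (g z) r) := by
    intro q hq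
    obtain ⟨w, hw, rfl⟩ := hball hq
    exact (hinj.hasDerivAt_invFunOn isOpen_ball hg hw).differentiableAt.differentiableWithinAt
  have hGmaps : MapsTo (invFunOn g (ball 0 1)) (ball (g z) r) (ball 0 1) := fun q hq ↦
    invFunOn_mem (hball hq)
  have := Complex.norm_deriv_mul_le_one_sub_sq_of_mapsTo_ball hG hGmaps hr
  rw [(hinj.hasDerivAt_invFunOn isOpen_ball hg hz).deriv, hinj.leftInvOn_invFunOn hz, norm_inv,
    inv_mul_le_iff₀ (norm_pos_iff.mpr (hinj.deriv_ne_zero isOpen_ball hg hz))] at this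
  linarith

end Univalent

lemma IsOpen.ball_infDist_frontier_subset {E : Type*} [NormedAddCommGroup E] [NormedSpace ℝ E]
    {Ω : Set E} {a : E} (hΩ : IsOpen Ω) (ha : a ∈ Ω) :
    ball a (infDist a (frontier Ω)) ⊆ Ω := by
  rcases (infDist_nonneg (x := a) (s := frontier Ω)).eq_or_lt with h | h
  · simp [← h]
  refine (convex_ball a _).isPreconnected.subset_of_closure_inter_subset hΩ
    ⟨a, mem_ball_self h, ha⟩ fun x ⟨hxc, hxb⟩ ↦ ?_
  by_contra hxΩ
  exact ball_infDist_subset_compl hxb ⟨hxc, by rwa [hΩ.interior_eq]⟩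

/-- If `g` is analytic and univalent on the unit disk with convex image, then for all `z` in
the disk, `(1/2)(1-|z|²)|g'(z)| ≤ dist(g(z), ∂g(𝔻)) ≤ (1-|z|²)|g'(z)|`. -/
theorem stmt12 (g : ℂ → ℂ)
    (hg : DifferentiableOn ℂ g (Metric.ball (0:ℂ) 1))
    (hinj : Set.InjOn g (Metric.ball (0:ℂ) 1))
    (hconv : Convex ℝ (g '' Metric.ball (0:ℂ) 1)) :
    ∀ z ∈ Metric.ball (0:ℂ) 1,
      (1 / 2) * (1 - ‖z‖ ^ 2) * ‖deriv g z‖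
          ≤ Metric.infDist (g z) (frontier (g '' Metric.ball (0:ℂ) 1)) ∧
        Metric.infDist (g z) (frontier (g '' Metric.ball (0:ℂ) 1))
          ≤ (1 - ‖z‖ ^ 2) * ‖deriv g z‖ := by
  intro z hz
  have hz₂ : 0 ≤ 1 - ‖z‖ ^ 2 := by nlinarith [norm_nonneg z, mem_ball_zero_iff.mp hz]
  have hΩ : IsOpen (g '' ball 0 1) := hinj.isOpen_image isOpen_ball hg
  have hgz : g z ∈ g '' ball 0 1 := mem_image_of_mem g hz
  have hfr : (frontier (g '' ball 0 1)).Nonempty := by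
    refine nonempty_frontier_iff.mpr ⟨⟨_, hgz⟩, fun huniv ↦ ?_⟩
    have hr : 0 < (1 - ‖z‖ ^ 2) * ‖deriv g z‖ + 1 := by positivity
    linarith [radius_le_of_ball_subset_image hg hinj hz hr (huniv ▸ subset_univ _)]
  constructor
  · obtain ⟨y, hy, hyd⟩ := isClosed_frontier.exists_infDist_eq_dist hfr (g z)
    have := Complex.norm_deriv_mul_le_two_mul_dist_of_mapsTo_convex hconv hΩ hg
      (mapsTo_image g _) (disjoint_left.mp (disjoint_frontier_iff_isOpen.mpr hΩ) hy) hz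
    rw [hyd]
    linarith
  · rcases (infDist_nonneg (x := g z) (s := frontier (g '' ball 0 1))).eq_or_lt with hd | hd
    · rw [← hd]
      positivity
    · exact radius_le_of_ball_subset_image hg hinj hz hd (hΩ.ball_infDist_frontier_subset hgz)
end

section
/- Let g be analytic and univalent on 𝔻 with convex image, and let f(z) = Σ_{n≥0} b_n z^n be analytic with f ≺ g (f subordinate to g). Then |b_n| ≤ |g'(0)| ≤ 2·dist(g(0), ∂g(𝔻)) for every n ≥ 1. -/
/-!
Both bounds reduce to the Schwarz lemma. For `‖b n‖ ≤ ‖g' 0‖` (Rogosinski), average `f` over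
the rotations `z ↦ ω ^ k * z` by the `n`-th roots of unity: this keeps the coefficients
`b (n * j)`, so `Φ ζ = ∑ b (n * j) ζ ^ j` satisfies `Φ (z ^ n) = n⁻¹ ∑ₖ f (ω ^ k * z)`, which lies
in the convex set `g(𝔻)`. Hence `g⁻¹ ∘ Φ` is a self-map of `𝔻` fixing `0`, and `Φ'(0) = b n`.
The inverse `g⁻¹` is holomorphic by the inverse function theorem away from the isolated critical
points of `g`, and by the removable singularity theorem at them.

For `‖g' 0‖ ≤ 2 dist`, separate `g(𝔻)` from a point `q` outside it by a real line; the map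
`F = v̄ (g - g 0)` then takes values in a half-plane `re < s` with `s ≤ ‖v‖ ‖q - g 0‖`, and
Schwarz applied to `F / (2 s - F)` gives `‖F' 0‖ ≤ 2 s`. The boundary of `g(𝔻)` is nonempty
by Liouville's theorem applied to `g⁻¹`.
-/

open Metric Set Filter Function Topology
open scoped InnerProductSpace

theorem Set.InjOn.not_eventually_eq {X Y : Type*} [TopologicalSpace X] {f : X → Y} {s : Set X}
    {x : X} [(𝓝[≠] x).NeBot] (hf : InjOn f s) (hs : s ∈ 𝓝 x) :
    ¬∀ᶠ y in 𝓝 x, f y = f x := by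
  intro h
  obtain ⟨y, ⟨hy, hys⟩, hyx⟩ :=
    (((h.and hs).filter_mono nhdsWithin_le_nhds).and (self_mem_nhdsWithin (s := {x}ᶜ))).exists
  exact hyx (hf hys (mem_of_mem_nhds hs) hy)

section InverseFunction

variable {g : ℂ → ℂ} {U : Set ℂ}

theorem isOpen_image_of_injOn (hU : IsOpen U) (hg : DifferentiableOn ℂ g U) (hinj : InjOn g U)
    {s : Set ℂ} (hsU : s ⊆ U) (hs : IsOpen s) : IsOpen (g '' s) := by
  refine isOpen_iff_mem_nhds.mpr ?_
  rintro _ ⟨z, hz, rfl⟩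
  have hzU : U ∈ 𝓝 z := hU.mem_nhds (hsU hz)
  exact (hg.analyticAt hzU).eventually_constant_or_nhds_le_map_nhds.resolve_left
    (hinj.not_eventually_eq hzU) (image_mem_map (hs.mem_nhds hz))

theorem continuousOn_invFunOn_image (hU : IsOpen U) (hg : DifferentiableOn ℂ g U)
    (hinj : InjOn g U) : ContinuousOn (invFunOn g U) (g '' U) :=
  IsOpenMap.continuousOn_image_of_leftInvOn
    (fun t ht ↦ by
      obtain ⟨t', ht', rfl⟩ := isOpen_induced_iff.mp ht
      rw [image_domRestrict]
      exact isOpen_image_of_injOn hU hg hinj inter_subset_right (ht'.inter hU))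
    hinj.leftInvOn_invFunOn

theorem eventually_deriv_ne_zero_of_injOn (hU : IsOpen U) (hg : DifferentiableOn ℂ g U)
    (hinj : InjOn g U) {z₀ : ℂ} (hz₀ : z₀ ∈ U) : ∀ᶠ z in 𝓝[≠] z₀, deriv g z ≠ 0 := by
  have hU₀ : U ∈ 𝓝 z₀ := hU.mem_nhds hz₀
  refine ((hg.analyticOnNhd hU).deriv z₀ hz₀).eventually_eq_zero_or_eventually_ne_zero.resolve_left
    fun h ↦ hinj.not_eventually_eq hU₀ ?_
  obtain ⟨ε, hε, hball⟩ := eventually_nhds_iff_ball.mp (h.and hU₀)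
  filter_upwards [ball_mem_nhds z₀ hε] with z hz
  exact isOpen_ball.is_const_of_deriv_eq_zero (convex_ball z₀ ε).isPreconnected
    (hg.mono fun w hw ↦ (hball w hw).2) (fun w hw ↦ (hball w hw).1) hz (mem_ball_self hε)

theorem differentiableAt_invFunOn_of_deriv_ne_zero (hU : IsOpen U) (hg : DifferentiableOn ℂ g U)
    (hinj : InjOn g U) {z : ℂ} (hz : z ∈ U) (hdz : deriv g z ≠ 0) :
    DifferentiableAt ℂ (invFunOn g U) (g z) := by
  have hΩ : g '' U ∈ 𝓝 (g z) :=
    (isOpen_image_of_injOn hU hg hinj subset_rfl hU).mem_nhds (mem_image_of_mem g hz)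
  have hderiv : HasDerivAt g (deriv g z) (invFunOn g U (g z)) := by
    rw [hinj.leftInvOn_invFunOn hz]
    exact (hg.differentiableAt (hU.mem_nhds hz)).hasDerivAt
  exact (hderiv.of_local_left_inverse
    ((continuousOn_invFunOn_image hU hg hinj).continuousAt hΩ) hdz
    (mem_of_superset hΩ fun _ hy ↦ invFunOn_eq hy)).differentiableAt

theorem differentiableOn_invFunOn_image (hU : IsOpen U) (hg : DifferentiableOn ℂ g U)
    (hinj : InjOn g U) : DifferentiableOn ℂ (invFunOn g U) (g '' U) := by
  rintro _ ⟨z₀, hz₀, rfl⟩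
  have hΩ : g '' U ∈ 𝓝 (g z₀) :=
    (isOpen_image_of_injOn hU hg hinj subset_rfl hU).mem_nhds (mem_image_of_mem g hz₀)
  have hGc : ContinuousAt (invFunOn g U) (g z₀) :=
    (continuousOn_invFunOn_image hU hg hinj).continuousAt hΩ
  have hGz₀ : invFunOn g U (g z₀) = z₀ := hinj.leftInvOn_invFunOn hz₀
  have hlim : Tendsto (invFunOn g U) (𝓝[≠] (g z₀)) (𝓝[≠] z₀) := by
    refine tendsto_nhdsWithin_of_tendsto_nhds_of_eventually_within _
      ((hGz₀ ▸ hGc.tendsto).mono_left nhdsWithin_le_nhds) ?_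
    filter_upwards [self_mem_nhdsWithin, mem_nhdsWithin_of_mem_nhds hΩ] with y hy hyΩ hGy
    exact hy ((invFunOn_eq hyΩ).symm.trans (congrArg g hGy))
  refine (Complex.analyticAt_of_differentiable_on_punctured_nhds_of_continuousAt ?_
    hGc).differentiableAt.differentiableWithinAt
  filter_upwards [hlim.eventually (eventually_deriv_ne_zero_of_injOn hU hg hinj hz₀),
    hlim.eventually (eventually_nhdsWithin_of_eventually_nhds (hU.mem_nhds hz₀)),
    mem_nhdsWithin_of_mem_nhds hΩ] with y hdy hGy hyΩ
  simpa only [invFunOn_eq hyΩ] using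
    differentiableAt_invFunOn_of_deriv_ne_zero hU hg hinj hGy hdy

end InverseFunction

section Disk

variable {g : ℂ → ℂ} {c : ℂ} {R : ℝ}

theorem norm_deriv_le_of_mapsTo_image {Φ : ℂ → ℂ} (hR : 0 < R)
    (hg : DifferentiableOn ℂ g (ball c R)) (hinj : InjOn g (ball c R))
    (hΦ : DifferentiableOn ℂ Φ (ball c R)) (hΦg : MapsTo Φ (ball c R) (g '' ball c R))
    (hΦc : Φ c = g c) : ‖deriv Φ c‖ ≤ ‖deriv g c‖ := by
  set w := invFunOn g (ball c R) ∘ Φ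
  have hwc : w c = c := by
    simp only [w, comp_apply, hΦc, hinj.leftInvOn_invFunOn (mem_ball_self hR)]
  have hw : DifferentiableOn ℂ w (ball c R) :=
    (differentiableOn_invFunOn_image isOpen_ball hg hinj).comp hΦ hΦg
  have hschwarz : ‖deriv w c‖ ≤ 1 := by
    have hmaps : MapsTo w (ball c R) (closedBall (w c) R) := fun z hz ↦ by
      rw [hwc]
      exact ball_subset_closedBall (invFunOn_mem (hΦg hz))
    simpa [hR.ne'] using Complex.norm_deriv_le_div_of_mapsTo_ball hw hmaps hR
  have hΦw : Φ =ᶠ[𝓝 c] g ∘ w :=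
    eventually_of_mem (ball_mem_nhds c hR) fun z hz ↦ (invFunOn_eq (hΦg hz)).symm
  have hchain : deriv Φ c = deriv g c * deriv w c := by
    have hgw : DifferentiableAt ℂ g (w c) := by
      rw [hwc]
      exact hg.differentiableAt (ball_mem_nhds c hR)
    rw [hΦw.deriv_eq, deriv_comp c hgw (hw.differentiableAt (ball_mem_nhds c hR)), hwc]
  calc ‖deriv Φ c‖ = ‖deriv g c‖ * ‖deriv w c‖ := by rw [hchain, norm_mul]
    _ ≤ ‖deriv g c‖ := mul_le_of_le_one_right (norm_nonneg _) hschwarz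

/-- `z ↦ F z / (2 s - F z)` maps the half-plane `re < s` into the unit disk. -/
theorem norm_deriv_le_of_re_lt {F : ℂ → ℂ} {s : ℝ} (hR : 0 < R)
    (hF : DifferentiableOn ℂ F (ball c R)) (hFc : F c = 0) (hre : ∀ z ∈ ball c R, (F z).re < s) :
    ‖deriv F c‖ ≤ 2 * s / R := by
  have hs : 0 < s := by simpa [hFc] using hre c (mem_ball_self hR)
  have hnorm : ∀ z ∈ ball c R, ‖F z‖ < ‖2 * s - F z‖ := by
    intro z hz
    have hlt := hre z hz
    rw [← sq_lt_sq₀ (norm_nonneg _) (norm_nonneg _), Complex.sq_norm, Complex.sq_norm,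
      Complex.normSq_apply, Complex.normSq_apply]
    simp only [Complex.sub_re, Complex.sub_im, Complex.mul_re, Complex.mul_im, Complex.ofReal_re,
      Complex.ofReal_im, Complex.re_ofNat, Complex.im_ofNat]
    nlinarith
  have hden : ∀ z ∈ ball c R, 2 * (s : ℂ) - F z ≠ 0 := fun z hz h ↦ by
    simpa [h] using (norm_nonneg _).trans_lt (hnorm z hz)
  set H := fun z ↦ F z / (2 * s - F z)
  have hH : DifferentiableOn ℂ H (ball c R) :=
    hF.div ((differentiableOn_const _).sub hF) hden
  have hmaps : MapsTo H (ball c R) (closedBall (H c) 1) := by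
    intro z hz
    rw [mem_closedBall_iff_norm]
    simp only [H, hFc, zero_div, sub_zero, norm_div]
    exact (div_lt_one ((norm_nonneg _).trans_lt (hnorm z hz))).mpr (hnorm z hz) |>.le
  have hderiv : deriv H c = deriv F c / (2 * s) := by
    have hFd := (hF.differentiableAt (ball_mem_nhds c hR)).hasDerivAt
    have hHd : HasDerivAt H ((deriv F c * (2 * s - F c) - F c * (0 - deriv F c)) /
        (2 * s - F c) ^ 2) c :=
      hFd.div ((hasDerivAt_const c _).sub hFd) (hden c (mem_ball_self hR))
    have hs0 : (s : ℂ) ≠ 0 := Complex.ofReal_ne_zero.mpr hs.ne'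
    rw [hHd.deriv, hFc]
    field_simp
    ring
  have hschwarz := Complex.norm_deriv_le_div_of_mapsTo_ball hH hmaps hR
  rw [hderiv, norm_div, norm_mul, Complex.norm_real, Real.norm_of_nonneg hs.le,
    Complex.norm_two, div_le_div_iff₀ (by positivity) hR] at hschwarz
  rw [le_div_iff₀ hR]
  linarith

theorem exists_inner_lt_of_convex_of_notMem {Ω : Set ℂ} (hconv : Convex ℝ Ω) (hopen : IsOpen Ω)
    {q : ℂ} (hq : q ∉ Ω) : ∃ v : ℂ, ∀ y ∈ Ω, ⟪v, y⟫_ℝ < ⟪v, q⟫_ℝ := by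
  obtain ⟨l, hl⟩ := geometric_hahn_banach_open_point hconv hopen hq
  exact ⟨(InnerProductSpace.toDual ℝ ℂ).symm l, by simpa only [InnerProductSpace.toDual_symm_apply]⟩

theorem norm_deriv_le_two_mul_dist_div_of_notMem (hR : 0 < R)
    (hg : DifferentiableOn ℂ g (ball c R)) (hconv : Convex ℝ (g '' ball c R))
    (hopen : IsOpen (g '' ball c R)) {q : ℂ} (hq : q ∉ g '' ball c R) :
    ‖deriv g c‖ ≤ 2 * dist (g c) q / R := by
  obtain ⟨v, hv⟩ := exists_inner_lt_of_convex_of_notMem hconv hopen hq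
  have hv0 : v ≠ 0 := by
    rintro rfl
    simpa using hv _ (mem_image_of_mem g (mem_ball_self hR))
  set F := fun z ↦ (starRingEnd ℂ) v * (g z - g c)
  have hFre : ∀ z, (F z).re = ⟪v, g z - g c⟫_ℝ := fun z ↦ by
    rw [Complex.inner, mul_comm]
  have hF : DifferentiableOn ℂ F (ball c R) := (hg.sub_const _).const_mul _
  have hbound := norm_deriv_le_of_re_lt hR hF (by simp [F]) (s := ⟪v, q - g c⟫_ℝ) fun z hz ↦ by
    rw [hFre, inner_sub_right, inner_sub_right]
    linarith [hv _ (mem_image_of_mem g hz)]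
  have hderiv : deriv F c = (starRingEnd ℂ) v * deriv g c := by
    simp only [F]
    rw [deriv_const_mul _ ((hg.differentiableAt (ball_mem_nhds c hR)).sub_const _), deriv_sub_const]
  have hinner : ⟪v, q - g c⟫_ℝ ≤ ‖v‖ * dist (g c) q := by
    rw [dist_comm, dist_eq_norm]
    exact real_inner_le_norm _ _
  rw [hderiv, norm_mul, Complex.norm_conj, le_div_iff₀ hR] at hbound
  rw [le_div_iff₀ hR]
  refine le_of_mul_le_mul_left ?_ (norm_pos_iff.mpr hv0)
  calc ‖v‖ * (‖deriv g c‖ * R) = ‖v‖ * ‖deriv g c‖ * R := by ring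
    _ ≤ 2 * ⟪v, q - g c⟫_ℝ := hbound
    _ ≤ ‖v‖ * (2 * dist (g c) q) := by linarith

theorem image_ne_univ_of_injOn {U : Set ℂ} (hU : IsOpen U) (hUb : Bornology.IsBounded U)
    (hg : DifferentiableOn ℂ g U) (hinj : InjOn g U) (hne : U.Nonempty) : g '' U ≠ univ := by
  intro h
  have hG : Differentiable ℂ (invFunOn g U) := by
    rw [← differentiableOn_univ, ← h]
    exact differentiableOn_invFunOn_image hU hg hinj
  have hbdd : Bornology.IsBounded (range (invFunOn g U)) :=
    hUb.subset (range_subset_iff.mpr fun y ↦ invFunOn_mem (h.symm ▸ mem_univ y : y ∈ g '' U))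
  obtain ⟨z, hz⟩ := hne
  refine hinj.not_eventually_eq (hU.mem_nhds hz) (mem_of_superset (hU.mem_nhds hz) fun y hy ↦ ?_)
  have hyz : y = z := calc
    y = invFunOn g U (g y) := (hinj.leftInvOn_invFunOn hy).symm
    _ = invFunOn g U (g z) := hG.apply_eq_apply_of_bounded hbdd _ _
    _ = z := hinj.leftInvOn_invFunOn hz
  exact congrArg g hyz

theorem norm_deriv_le_two_mul_infDist_frontier_div (hR : 0 < R)
    (hg : DifferentiableOn ℂ g (ball c R)) (hinj : InjOn g (ball c R))
    (hconv : Convex ℝ (g '' ball c R)) :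
    ‖deriv g c‖ ≤ 2 * infDist (g c) (frontier (g '' ball c R)) / R := by
  have hopen := isOpen_image_of_injOn isOpen_ball hg hinj subset_rfl isOpen_ball
  have hfr : (frontier (g '' ball c R)).Nonempty :=
    nonempty_frontier_iff.mpr ⟨(nonempty_ball.mpr hR).image g,
      image_ne_univ_of_injOn isOpen_ball isBounded_ball hg hinj (nonempty_ball.mpr hR)⟩
  have hle : ‖deriv g c‖ * R / 2 ≤ infDist (g c) (frontier (g '' ball c R)) := by
    refine (le_infDist hfr).mpr fun q hq ↦ ?_
    rw [hopen.frontier_eq] at hq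
    have hq_bound := norm_deriv_le_two_mul_dist_div_of_notMem hR hg hconv hopen hq.2
    rw [le_div_iff₀ hR] at hq_bound
    linarith
  rw [le_div_iff₀ hR]
  linarith

end Disk

theorem IsPrimitiveRoot.geom_sum_pow_eq_ite {K : Type*} [Field K] {ω : K} {n : ℕ}
    (hω : IsPrimitiveRoot ω n) (m : ℕ) :
    ∑ k ∈ Finset.range n, (ω ^ m) ^ k = if n ∣ m then (n : K) else 0 := by
  split_ifs with hd
  · simp [(hω.pow_eq_one_iff_dvd m).mpr hd]
  · have hne : ω ^ m ≠ 1 := mt (hω.pow_eq_one_iff_dvd m).mp hd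
    rw [geom_sum_eq hne, ← pow_mul, mul_comm, pow_mul, hω.pow_eq_one, one_pow, sub_self, zero_div]

theorem IsPrimitiveRoot.hasSum_lacunary {K : Type*} [Field K] [CharZero K] [TopologicalSpace K]
    [IsTopologicalRing K] {ω z : K} {n : ℕ} {b a : ℕ → K} (hω : IsPrimitiveRoot ω n)
    (hn : 0 < n) (h : ∀ k ∈ Finset.range n, HasSum (fun m ↦ b m * (ω ^ k * z) ^ m) (a k)) :
    HasSum (fun j ↦ b (n * j) * (z ^ n) ^ j) ((n : K)⁻¹ * ∑ k ∈ Finset.range n, a k) := by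
  have hn0 : (n : K) ≠ 0 := Nat.cast_ne_zero.mpr hn.ne'
  have hterm : ∀ m, ∑ k ∈ Finset.range n, b m * (ω ^ k * z) ^ m =
      if n ∣ m then n * (b m * z ^ m) else 0 := fun m ↦ by
    calc ∑ k ∈ Finset.range n, b m * (ω ^ k * z) ^ m
        = b m * z ^ m * ∑ k ∈ Finset.range n, (ω ^ m) ^ k := by
          rw [Finset.mul_sum]
          refine Finset.sum_congr rfl fun k _ ↦ ?_
          rw [mul_pow, ← pow_mul, ← pow_mul, mul_comm k m]
          ring
      _ = _ := by rw [hω.geom_sum_pow_eq_ite]; split_ifs <;> ring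
  have hsum := hasSum_sum h
  simp only [hterm] at hsum
  have hsub := ((mul_right_injective₀ hn.ne').hasSum_iff fun m hm ↦ if_neg fun ⟨j, hj⟩ ↦
    hm ⟨j, hj.symm⟩).mpr hsum
  refine (hsub.mul_left (n : K)⁻¹).congr_fun fun j ↦ ?_
  simp [pow_mul, hn0]

theorem FormalMultilinearSeries.le_radius_ofScalars_of_summable {c : ℕ → ℂ} {r : NNReal}
    (h : ∀ ζ ∈ ball (0 : ℂ) r, Summable fun j ↦ c j * ζ ^ j) :
    (r : ENNReal) ≤ (ofScalars ℂ c).radius := by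
  refine ENNReal.le_of_forall_nnreal_lt fun t ht ↦ ?_
  have hs := h t (by simpa using ht)
  refine (ofScalars ℂ c).le_radius_of_tendsto (l := 0) ?_
  simpa [ofScalars_norm] using hs.tendsto_atTop_zero.norm

theorem hasFPowerSeriesOnBall_ofScalarsSum {c : ℕ → ℂ}
    (h : ∀ ζ ∈ ball (0 : ℂ) 1, Summable fun j ↦ c j * ζ ^ j) :
    HasFPowerSeriesOnBall (FormalMultilinearSeries.ofScalarsSum c)
      (FormalMultilinearSeries.ofScalars ℂ c) 0 1 := by
  have hrad : (1 : ENNReal) ≤ (FormalMultilinearSeries.ofScalars ℂ c).radius := by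
    simpa using FormalMultilinearSeries.le_radius_ofScalars_of_summable (r := 1) (by simpa using h)
  exact ((FormalMultilinearSeries.ofScalars ℂ c).hasFPowerSeriesOnBall
    (one_pos.trans_le hrad)).mono one_pos hrad

theorem exists_pow_eq_mem_ball_zero_one {n : ℕ} (hn : 0 < n) {ζ : ℂ} (hζ : ζ ∈ ball (0 : ℂ) 1) :
    ∃ z ∈ ball (0 : ℂ) 1, z ^ n = ζ := by
  obtain ⟨z, rfl⟩ := IsAlgClosed.exists_pow_nat_eq ζ hn
  refine ⟨z, ?_, rfl⟩
  rw [mem_ball_zero_iff, norm_pow] at hζ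
  rw [mem_ball_zero_iff]
  exact (pow_lt_one_iff_of_nonneg (norm_nonneg z) hn.ne').mp hζ

theorem norm_coeff_le_norm_deriv_of_subordinate {g f : ℂ → ℂ} {b : ℕ → ℂ}
    (hg : DifferentiableOn ℂ g (ball 0 1)) (hinj : InjOn g (ball 0 1))
    (hconv : Convex ℝ (g '' ball 0 1))
    (hf : ∀ z ∈ ball (0 : ℂ) 1, HasSum (fun m ↦ b m * z ^ m) (f z))
    (hfg : MapsTo f (ball 0 1) (g '' ball 0 1)) (hf0 : f 0 = g 0) {n : ℕ} (hn : 0 < n) :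
    ‖b n‖ ≤ ‖deriv g 0‖ := by
  obtain ⟨ω, hω⟩ : ∃ ω : ℂ, IsPrimitiveRoot ω n := ⟨_, Complex.isPrimitiveRoot_exp n hn.ne'⟩
  have hrot : ∀ z ∈ ball (0 : ℂ) 1, ∀ k : ℕ, ω ^ k * z ∈ ball (0 : ℂ) 1 := fun z hz k ↦ by
    simpa [norm_mul, norm_pow, hω.norm'_eq_one hn.ne'] using hz
  have hlac : ∀ z ∈ ball (0 : ℂ) 1, HasSum (fun j ↦ b (n * j) * (z ^ n) ^ j)
      ((n : ℂ)⁻¹ * ∑ k ∈ Finset.range n, f (ω ^ k * z)) := fun z hz ↦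
    hω.hasSum_lacunary hn fun k _ ↦ hf _ (hrot z hz k)
  have hsummable : ∀ ζ ∈ ball (0 : ℂ) 1, Summable fun j ↦ b (n * j) * ζ ^ j := fun ζ hζ ↦ by
    obtain ⟨z, hz, rfl⟩ := exists_pow_eq_mem_ball_zero_one hn hζ
    exact (hlac z hz).summable
  obtain ⟨Φ, hΦ⟩ : ∃ Φ : ℂ → ℂ,
      HasFPowerSeriesOnBall Φ (FormalMultilinearSeries.ofScalars ℂ fun j ↦ b (n * j)) 0 1 :=
    ⟨_, hasFPowerSeriesOnBall_ofScalarsSum hsummable⟩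
  have hball : eball (0 : ℂ) 1 = ball 0 1 := by
    rw [← ENNReal.coe_one, eball_coe, NNReal.coe_one]
  have hΦg : MapsTo Φ (ball 0 1) (g '' ball 0 1) := by
    intro ζ hζ
    obtain ⟨z, hz, rfl⟩ := exists_pow_eq_mem_ball_zero_one hn hζ
    have hΦz : Φ (z ^ n) = (n : ℂ)⁻¹ * ∑ k ∈ Finset.range n, f (ω ^ k * z) := by
      refine HasSum.unique ?_ (hlac z hz)
      simpa [FormalMultilinearSeries.ofScalars_apply_eq, mul_comm] using hΦ.hasSum (hball ▸ hζ)
    have hcenter := hconv.centerMass_mem (t := Finset.range n) (w := fun _ ↦ (1 : ℝ))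
      (z := fun k ↦ f (ω ^ k * z)) (fun _ _ ↦ zero_le_one) (by simpa using hn)
      (fun k _ ↦ hfg (hrot z hz k))
    simpa [hΦz, Finset.centerMass, Complex.real_smul] using hcenter
  have hΦ0 : Φ 0 = g 0 := by
    have hb0 : HasSum (fun m ↦ b m * (0 : ℂ) ^ m) (b 0) := by
      simpa using hasSum_single (f := fun m ↦ b m * (0 : ℂ) ^ m) 0 fun m hm ↦ by simp [hm]
    rw [← hf0, (hf 0 (mem_ball_self one_pos)).unique hb0, ← hΦ.coeff_zero ![]]
    simp
  have hΦ' : deriv Φ 0 = b n := by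
    simp [hΦ.hasFPowerSeriesAt.deriv]
  rw [← hΦ']
  exact norm_deriv_le_of_mapsTo_image one_pos hg hinj
    (hball ▸ hΦ.differentiableOn) hΦg hΦ0

/-- If `g` is analytic univalent on `𝔻` with convex image and `f = Σ b_n z^n` is subordinate
to `g`, then `|b_n| ≤ |g'(0)| ≤ 2 dist(g(0), ∂g(𝔻))` for all `n ≥ 1`. -/
theorem stmt13 (g f : ℂ → ℂ) (b : ℕ → ℂ)
    (hg : DifferentiableOn ℂ g (Metric.ball (0:ℂ) 1))
    (hinj : Set.InjOn g (Metric.ball (0:ℂ) 1))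
    (hconv : Convex ℝ (g '' Metric.ball (0:ℂ) 1))
    (hf : ∀ z ∈ Metric.ball (0:ℂ) 1, HasSum (fun n : ℕ => b n * z ^ n) (f z))
    (hsub : ∃ w : ℂ → ℂ, DifferentiableOn ℂ w (Metric.ball (0:ℂ) 1) ∧ w 0 = 0 ∧
      Set.MapsTo w (Metric.ball (0:ℂ) 1) (Metric.ball (0:ℂ) 1) ∧
      ∀ z ∈ Metric.ball (0:ℂ) 1, f z = g (w z)) :
    ∀ n : ℕ, 1 ≤ n → ‖b n‖ ≤ ‖deriv g 0‖ ∧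
      ‖deriv g 0‖ ≤ 2 * Metric.infDist (g 0) (frontier (g '' Metric.ball (0:ℂ) 1)) := by
  obtain ⟨w, -, hw0, hw, hfw⟩ := hsub
  have hfg : MapsTo f (ball 0 1) (g '' ball 0 1) := fun z hz ↦
    hfw z hz ▸ mem_image_of_mem g (hw hz)
  have hf0 : f 0 = g 0 := by rw [hfw 0 (mem_ball_self one_pos), hw0]
  intro n hn
  exact ⟨norm_coeff_le_norm_deriv_of_subordinate hg hinj hconv hf hfg hf0 hn,
    by simpa using norm_deriv_le_two_mul_infDist_frontier_div one_pos hg hinj hconv⟩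
end

section
/- For every K ≥ 1, α ∈ [1,2], t ∈ [0,1] with t < 1, and integer m ≥ 1, the equation t·f_α(r^m) + (2K(1-t)/(K+1))·f_α(r) = 1/(2α) has a unique solution r in (0,1), where f_α(r) = (1/(2α))(((1+r)/(1-r))^α - 1). -/
/-!
The left-hand side `g r = t f_α(r^m) + c f_α(r)`, with `c = 2K(1-t)/(K+1) > 0`, is continuous and
strictly increasing on `[0,1)`, vanishes at `0` and is unbounded as `r → 1`, because
`(1+r)/(1-r)` increases from `1` to `∞`. The intermediate value theorem gives a solution and
strict monotonicity makes it unique.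
-/

open Set

theorem existsUnique_mem_Ioo_of_strictMonoOn_Ico {a b y : ℝ} {g : ℝ → ℝ}
    (hcont : ContinuousOn g (Ico a b)) (hmono : StrictMonoOn g (Ico a b)) (ha : g a < y)
    (hb : ∃ r ∈ Ico a b, y ≤ g r) : ∃! x, x ∈ Ioo a b ∧ g x = y := by
  obtain ⟨r, ⟨har, hrb⟩, hyr⟩ := hb
  have hsub : Icc a r ⊆ Ico a b := Icc_subset_Ico_right hrb
  obtain ⟨x, ⟨hax, hxr⟩, hx⟩ :=
    intermediate_value_Icc har (hcont.mono hsub) ⟨ha.le, hyr⟩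
  have hax' : a < x := lt_of_le_of_ne hax (by rintro rfl; exact ha.ne hx)
  refine ⟨x, ⟨⟨hax', hxr.trans_lt hrb⟩, hx⟩, fun z ⟨hz, hzy⟩ => ?_⟩
  exact hmono.injOn (Ioo_subset_Ico_self hz) (hsub ⟨hax, hxr⟩) (hzy.trans hx.symm)

lemma strictMonoOn_const_mul_add_const_mul {f g : ℝ → ℝ} {s : Set ℝ} {a b : ℝ} (ha : 0 ≤ a)
    (hb : 0 < b) (hf : MonotoneOn f s) (hg : StrictMonoOn g s) :
    StrictMonoOn (fun x => a * f x + b * g x) s := fun _ hx _ hy hxy =>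
  add_lt_add_of_le_of_lt (mul_le_mul_of_nonneg_left (hf hx hy hxy.le) ha)
    (mul_lt_mul_of_pos_left (hg hx hy hxy) hb)

lemma one_le_one_add_div_one_sub {r : ℝ} (h0 : 0 ≤ r) (h1 : r < 1) : 1 ≤ (1 + r) / (1 - r) := by
  rw [le_div_iff₀ (by linarith)]
  linarith

lemma strictMonoOn_one_add_div_one_sub : StrictMonoOn (fun r : ℝ => (1 + r) / (1 - r)) (Iio 1) := by
  intro a ha b hb hab
  simp only [mem_Iio] at ha hb
  rw [div_lt_div_iff₀ (by linarith) (by linarith)]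
  nlinarith

lemma one_add_div_one_sub_sub_div_add {M : ℝ} (hM : M + 1 ≠ 0) :
    (1 + (M - 1) / (M + 1)) / (1 - (M - 1) / (M + 1)) = M := by
  field_simp
  ring

lemma mapsTo_pow_Ico {m : ℕ} (hm : m ≠ 0) : MapsTo (fun r : ℝ => r ^ m) (Ico 0 1) (Ico 0 1) :=
  fun _ ⟨h0, h1⟩ => ⟨pow_nonneg h0 m, pow_lt_one₀ h0 h1 hm⟩

noncomputable def fAlpha (α r : ℝ) : ℝ := 1 / (2 * α) * (((1 + r) / (1 - r)) ^ α - 1)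

namespace fAlpha

variable {α : ℝ}

@[simp]
lemma apply_zero (α : ℝ) : fAlpha α 0 = 0 := by
  simp [fAlpha]

lemma strictMonoOn (hα : 0 < α) : StrictMonoOn (fAlpha α) (Ico 0 1) := by
  intro a ⟨ha0, ha1⟩ b ⟨_, hb1⟩ hab
  have hbase := strictMonoOn_one_add_div_one_sub ha1 hb1 hab
  have hpow := Real.rpow_lt_rpow
    (zero_le_one.trans (one_le_one_add_div_one_sub ha0 ha1)) hbase hα
  unfold fAlpha
  gcongr

lemma nonneg (hα : 0 < α) {r : ℝ} (hr : r ∈ Ico 0 1) : 0 ≤ fAlpha α r := by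
  simpa using (strictMonoOn hα).monotoneOn ⟨le_rfl, zero_lt_one⟩ hr hr.1

lemma continuousOn (hα : 0 ≤ α) : ContinuousOn (fAlpha α) (Iio 1) := by
  have hden : ∀ r ∈ Iio (1 : ℝ), 1 - r ≠ 0 := fun r hr => by
    simp only [mem_Iio] at hr
    linarith
  unfold fAlpha
  exact continuousOn_const.mul
    (((continuousOn_const.add continuousOn_id).div (continuousOn_const.sub continuousOn_id)
      hden).rpow_const (fun _ _ => Or.inr hα) |>.sub continuousOn_const)

lemma strictMonoOn_comp_pow (hα : 0 < α) {m : ℕ} (hm : m ≠ 0) :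
    StrictMonoOn (fun r => fAlpha α (r ^ m)) (Ico 0 1) :=
  (strictMonoOn hα).comp ((pow_left_strictMonoOn₀ hm).mono fun _ hr => hr.1) (mapsTo_pow_Ico hm)

lemma continuousOn_comp_pow (hα : 0 ≤ α) {m : ℕ} (hm : m ≠ 0) :
    ContinuousOn (fun r => fAlpha α (r ^ m)) (Ico 0 1) :=
  (continuousOn hα).comp (continuousOn_pow m) fun _ hr => (mapsTo_pow_Ico hm hr).2

lemma exists_le_apply (hα : 0 < α) (y : ℝ) : ∃ r ∈ Ico 0 1, y ≤ fAlpha α r := by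
  set M := (1 + 2 * α * |y|) ^ α⁻¹
  have hM : 1 ≤ M := Real.one_le_rpow (by nlinarith [abs_nonneg y]) (inv_nonneg.2 hα.le)
  refine ⟨(M - 1) / (M + 1), ⟨div_nonneg (by linarith) (by linarith),
    (div_lt_one (by linarith)).2 (by linarith)⟩, ?_⟩
  rw [fAlpha, one_add_div_one_sub_sub_div_add (by linarith),
    Real.rpow_inv_rpow (by nlinarith [abs_nonneg y]) hα.ne']
  field_simp
  nlinarith [le_abs_self y]

end fAlpha

/-- For `K ≥ 1`, `α ∈ [1,2]`, `t ∈ [0,1)`, `m ≥ 1`, the equation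
`t f_α(r^m) + (2K(1-t)/(K+1)) f_α(r) = 1/(2α)` has a unique solution in `(0,1)`. -/
theorem stmt15 (K α t : ℝ) (hK : 1 ≤ K) (hα : α ∈ Set.Icc (1:ℝ) 2)
    (ht0 : 0 ≤ t) (ht1 : t < 1) (m : ℕ) (hm : 1 ≤ m)
    (f : ℝ → ℝ) (hf : ∀ r, f r = (1 / (2 * α)) * (((1 + r) / (1 - r)) ^ α - 1)) :
    ∃! r : ℝ, r ∈ Set.Ioo (0:ℝ) 1 ∧
      t * f (r ^ m) + (2 * K * (1 - t) / (K + 1)) * f r = 1 / (2 * α) := by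
  obtain rfl : f = fAlpha α := funext hf
  have hα0 : 0 < α := by linarith [hα.1]
  have hm0 : m ≠ 0 := by omega
  set c := 2 * K * (1 - t) / (K + 1)
  have hc : 0 < c := div_pos (by nlinarith) (by linarith)
  apply existsUnique_mem_Ioo_of_strictMonoOn_Ico
  · exact (continuousOn_const.mul (fAlpha.continuousOn_comp_pow hα0.le hm0)).add
      (continuousOn_const.mul ((fAlpha.continuousOn hα0.le).mono Ico_subset_Iio_self))
  · exact strictMonoOn_const_mul_add_const_mul ht0 hc
      (fAlpha.strictMonoOn_comp_pow hα0 hm0).monotoneOn (fAlpha.strictMonoOn hα0)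
  · rw [zero_pow hm0, fAlpha.apply_zero, mul_zero, mul_zero, add_zero]
    positivity
  · obtain ⟨r, hr, hfr⟩ := fAlpha.exists_le_apply hα0 (1 / (2 * α) / c)
    have hpow : 0 ≤ t * fAlpha α (r ^ m) :=
      mul_nonneg ht0 (fAlpha.nonneg hα0 (mapsTo_pow_Ico hm0 hr))
    refine ⟨r, hr, ?_⟩
    have : 1 / (2 * α) ≤ c * fAlpha α r := by rwa [div_le_iff₀' hc] at hfr
    linarith
end
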